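/- Let X, Y¹ and Y² be Banach spaces and let Y = L_c(Y¹,Y²) be the Banach space of bounded linear operators from Y¹ to Y², with the operator norm. Let A ⊆ X be an open subset, W ⊆ X a finite-dimensional subspace, and K ⊆ W ∩ A a compact and convex subset. Let F ∈ C¹(A,Y) be such that F|_{W∩A} is injective, F'(x)|_W is injective for every x ∈ W ∩ A, and the operator F'(ξ)τ : Y¹ → Y² is compact for every ξ ∈ A and τ ∈ W. Let P¹_N : Y¹ → Y¹ and P²_N : Y² → Y² (N ∈ ℕ) be bounded linear maps such that P²_N y → y for every y ∈ Y² and (P¹_N)* φ → φ in the dual of Y¹ for every continuous linear functional φ on Y¹, and define Q_N : Y → Y by Q_N(T) = P²_N ∘ T ∘ P¹_N. Then there exist N ∈ ℕ and C > 0 such that ‖x₁ − x₂‖_X ≤ C ‖Q_N(F(x₁)) − Q_N(F(x₂))‖_Y for all x₁, x₂ ∈ K. -/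

import Mathlib

open Filter Topology Metric Set

/-!
Argue by contradiction: otherwise there are pairs `xₙ ≠ yₙ` in `K` whose difference quotients
`dₙ = (F xₙ - F yₙ) / ‖xₙ - yₙ‖` satisfy `‖Q_n dₙ‖ → 0`. By compactness of `K` and of the unit
sphere of `W`, a subsequence of `dₙ` converges either to a secant `(F a - F b) / ‖a - b‖` with
`a ≠ b` or to a derivative `F'(a) τ` with `‖τ‖ = 1`; injectivity makes the limit `T` nonzero, and
it is a compact operator (for a secant by the mean value theorem in `Y / compact operators`).
The sandwiches `Q_N` are uniformly bounded by Banach–Steinhaus, and `Q_N T → T` for compact `T`: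
on the compact closures of `T(ball)` and of `T*(dual ball)` (Schauder), the equicontinuous
families `P²_N` and `(P¹_N)*` converge uniformly. Hence `Q_n dₙ → T ≠ 0`, a contradiction.
-/

theorem TotallyBounded.image_of_dist_le {α β γ : Type*} [PseudoMetricSpace β]
    [PseudoMetricSpace γ] {s : Set α} {f : α → β} {g : α → γ} (hf : TotallyBounded (f '' s))
    (hfg : ∀ x ∈ s, ∀ y ∈ s, dist (g x) (g y) ≤ dist (f x) (f y)) :
    TotallyBounded (g '' s) := by
  refine Metric.totallyBounded_iff.2 fun ε hε => ?_
  obtain ⟨u, hus, hu, hcover⟩ := exists_subset_image_finite_and.1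
    (Metric.finite_approx_of_totallyBounded hf ε hε)
  refine ⟨g '' u, hu.image g, ?_⟩
  rintro _ ⟨x, hx, rfl⟩
  obtain ⟨_, ⟨y, hy, rfl⟩, hxy⟩ := mem_iUnion₂.1 (hcover (mem_image_of_mem f hx))
  exact mem_iUnion₂.2 ⟨g y, mem_image_of_mem g hy, (hfg x hx y (hus hy)).trans_lt hxy⟩

theorem EquicontinuousOn.tendstoUniformlyOn_of_tendsto {ι X α : Type*} [TopologicalSpace X]
    [UniformSpace α] {F : ι → X → α} {f : X → α} {l : Filter ι} {S : Set X}
    (hS : IsCompact S) (hF : EquicontinuousOn F S)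
    (h : ∀ x ∈ S, Tendsto (F · x) l (𝓝 (f x))) : TendstoUniformlyOn F f l S := by
  have := (EquicontinuousOn.tendsto_uniformOnFun_iff_pi' (𝔖 := {S}) (by simpa) (by simpa) l f).2
    (by simpa [tendsto_pi_nhds] using h)
  exact UniformOnFun.tendsto_iff_tendstoUniformlyOn.1 this S rfl

section Operators

variable {E F : Type*} [NormedAddCommGroup E] [NormedSpace ℝ E]
  [NormedAddCommGroup F] [NormedSpace ℝ F]

theorem ContinuousLinearMap.tendsto_of_tendstoUniformlyOn_closedBall {ι : Type*}
    {l : Filter ι} {A : ι → E →L[ℝ] F} {B : E →L[ℝ] F}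
    (h : TendstoUniformlyOn (fun i => ⇑(A i)) B l (closedBall 0 1)) : Tendsto A l (𝓝 B) := by
  refine Metric.tendsto_nhds.2 fun ε hε => ?_
  filter_upwards [Metric.tendstoUniformlyOn_iff.1 h (ε / 2) (half_pos hε)] with i hi
  refine lt_of_le_of_lt ?_ (half_lt_self hε)
  rw [dist_eq_norm]
  refine opNorm_le_of_unit_norm (half_pos hε).le fun x hx => ?_
  rw [sub_apply, ← dist_eq_norm, dist_comm]
  exact (hi x (by simp [hx])).le

theorem exists_norm_le_of_tendsto_apply [CompleteSpace E] {P : ℕ → E →L[ℝ] F} {g : E → F}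
    (h : ∀ x, Tendsto (fun n => P n x) atTop (𝓝 (g x))) : ∃ C, ∀ n, ‖P n‖ ≤ C :=
  banach_steinhaus fun x => by
    obtain ⟨C, hC⟩ := (h x).norm.bddAbove_range
    exact ⟨C, fun n => hC (mem_range_self n)⟩

theorem equicontinuous_of_tendsto_apply [CompleteSpace E] {P : ℕ → E →L[ℝ] F} {g : E → F}
    (h : ∀ x, Tendsto (fun n => P n x) atTop (𝓝 (g x))) : Equicontinuous fun n => ⇑(P n) :=
  ((NormedSpace.equicontinuous_TFAE P).out 5 1).1 (exists_norm_le_of_tendsto_apply h)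

namespace ContinuousLinearMap

noncomputable def dualMap (P : E →L[ℝ] F) : (F →L[ℝ] ℝ) →L[ℝ] E →L[ℝ] ℝ :=
  (compL ℝ E F ℝ).flip P

@[simp]
theorem dualMap_apply (P : E →L[ℝ] F) (φ : F →L[ℝ] ℝ) : P.dualMap φ = φ.comp P := rfl

theorem norm_le_norm_dualMap (P : E →L[ℝ] F) : ‖P‖ ≤ ‖P.dualMap‖ := by
  refine P.opNorm_le_bound (norm_nonneg P.dualMap) fun x =>
    NormedSpace.norm_le_dual_bound ℝ _ (by positivity) fun φ => ?_
  calc ‖φ (P x)‖ = ‖P.dualMap φ x‖ := rfl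
    _ ≤ ‖P.dualMap φ‖ * ‖x‖ := le_opNorm _ x
    _ ≤ ‖P.dualMap‖ * ‖φ‖ * ‖x‖ := by gcongr; exact le_opNorm _ φ
    _ = ‖P.dualMap‖ * ‖x‖ * ‖φ‖ := by ring

end ContinuousLinearMap

theorem exists_norm_le_of_tendsto_dualMap {P : ℕ → E →L[ℝ] F} {g : (F →L[ℝ] ℝ) → E →L[ℝ] ℝ}
    (h : ∀ φ, Tendsto (fun n => φ.comp (P n)) atTop (𝓝 (g φ))) : ∃ C, ∀ n, ‖P n‖ ≤ C := by
  obtain ⟨C, hC⟩ := exists_norm_le_of_tendsto_apply (P := fun n => (P n).dualMap) h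
  exact ⟨C, fun n => (P n).norm_le_norm_dualMap.trans (hC n)⟩

theorem IsCompactOperator.totallyBounded_image_dual_closedBall {T : E →L[ℝ] F}
    (hT : IsCompactOperator T) :
    TotallyBounded ((fun φ : F →L[ℝ] ℝ => φ.comp T) '' closedBall 0 1) := by
  set D := closure (T '' closedBall 0 1)
  have hD : IsCompact D := hT.isCompact_closure_image_closedBall 1
  have : CompactSpace D := isCompact_iff_compactSpace.1 hD
  obtain ⟨R, hR⟩ := hD.isBounded.subset_closedBall 0
  let ρ : (F →L[ℝ] ℝ) → BoundedContinuousFunction D ℝ := fun φ =>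
    BoundedContinuousFunction.mkOfCompact ⟨fun y => φ y, by fun_prop⟩
  have hρ : TotallyBounded (ρ '' closedBall 0 1) := by
    refine (BoundedContinuousFunction.arzela_ascoli (closedBall 0 R) (isCompact_closedBall 0 R)
      _ ?_ ?_).totallyBounded.subset subset_closure
    · rintro _ y ⟨φ, hφ, rfl⟩
      have hy : ‖(y : F)‖ ≤ R := mem_closedBall_zero_iff.1 (hR y.2)
      rw [mem_closedBall_zero_iff] at hφ ⊢
      calc ‖φ y‖ ≤ ‖φ‖ * ‖(y : F)‖ := φ.le_opNorm y
        _ ≤ 1 * R := mul_le_mul hφ hy (norm_nonneg _) zero_le_one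
        _ = R := one_mul R
    · refine (LipschitzWith.uniformEquicontinuous _ 1 fun ⟨_, φ, hφ, hρφ⟩ => ?_).equicontinuous
      subst hρφ
      refine LipschitzWith.of_dist_le_mul fun y z => ?_
      calc dist (φ y) (φ z) ≤ ‖φ‖ * dist (y : F) z := φ.lipschitz.dist_le_mul y z
        _ ≤ 1 * dist y z := mul_le_mul_of_nonneg_right (mem_closedBall_zero_iff.1 hφ) dist_nonneg
  refine hρ.image_of_dist_le fun φ hφ ψ hψ => ?_
  rw [dist_eq_norm]
  refine ContinuousLinearMap.opNorm_le_of_unit_norm dist_nonneg fun u hu => ?_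
  have hTu : T u ∈ D := subset_closure (mem_image_of_mem T (by simp [hu]))
  simpa [dist_eq_norm, ρ] using
    BoundedContinuousFunction.dist_coe_le_dist (f := ρ φ) (g := ρ ψ) ⟨T u, hTu⟩

theorem IsCompactOperator.tendsto_comp_of_tendsto_apply [CompleteSpace F]
    {P : ℕ → F →L[ℝ] F} (hP : ∀ y, Tendsto (fun n => P n y) atTop (𝓝 y)) {T : E →L[ℝ] F}
    (hT : IsCompactOperator T) : Tendsto (fun n => (P n).comp T) atTop (𝓝 T) := by
  have hunif := ((equicontinuous_of_tendsto_apply hP).equicontinuousOn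
    _).tendstoUniformlyOn_of_tendsto (hT.isCompact_closure_image_closedBall 1) fun y _ => hP y
  refine ContinuousLinearMap.tendsto_of_tendstoUniformlyOn_closedBall ?_
  exact (hunif.comp T).mono fun u hu => subset_closure (mem_image_of_mem T hu)

theorem IsCompactOperator.tendsto_comp_of_tendsto_dualMap {P : ℕ → E →L[ℝ] E}
    (hP : ∀ φ : E →L[ℝ] ℝ, Tendsto (fun n => φ.comp (P n)) atTop (𝓝 φ)) {T : E →L[ℝ] F}
    (hT : IsCompactOperator T) : Tendsto (fun n => T.comp (P n)) atTop (𝓝 T) := by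
  have hunif := ((equicontinuous_of_tendsto_apply (P := fun n => (P n).dualMap)
    hP).equicontinuousOn _).tendstoUniformlyOn_of_tendsto
    (hT.totallyBounded_image_dual_closedBall.closure.isCompact_of_isClosed isClosed_closure)
    fun ψ _ => hP ψ
  refine ContinuousLinearMap.tendsto_of_tendstoUniformlyOn_closedBall
    (Metric.tendstoUniformlyOn_iff.2 fun ε hε => ?_)
  filter_upwards [Metric.tendstoUniformlyOn_iff.1 hunif ε hε] with n hn u hu
  obtain ⟨φ, hφ, hφx⟩ := exists_dual_vector'' ℝ (T u - T (P n u))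
  have hψ := hn (φ.comp T) (subset_closure (mem_image_of_mem _ (mem_closedBall_zero_iff.2 hφ)))
  calc dist (T u) (T (P n u)) = (φ.comp T - (φ.comp T).comp (P n)) u := by
        rw [dist_eq_norm]; simpa using hφx.symm
    _ ≤ ‖(φ.comp T - (φ.comp T).comp (P n)) u‖ := Real.le_norm_self _
    _ ≤ ‖φ.comp T - (φ.comp T).comp (P n)‖ * ‖u‖ := ContinuousLinearMap.le_opNorm _ u
    _ ≤ dist (φ.comp T) ((P n).dualMap (φ.comp T)) * 1 := by
        rw [dist_eq_norm, ContinuousLinearMap.dualMap_apply]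
        exact mul_le_mul_of_nonneg_left (mem_closedBall_zero_iff.1 hu) (norm_nonneg _)
    _ < ε := by rwa [mul_one]

noncomputable def sandwichL (P₂ : F →L[ℝ] F) (P₁ : E →L[ℝ] E) : (E →L[ℝ] F) →L[ℝ] E →L[ℝ] F :=
  (ContinuousLinearMap.compL ℝ E F F P₂).comp ((ContinuousLinearMap.compL ℝ E E F).flip P₁)

@[simp]
theorem sandwichL_apply (P₂ : F →L[ℝ] F) (P₁ : E →L[ℝ] E) (T : E →L[ℝ] F) :
    sandwichL P₂ P₁ T = P₂.comp (T.comp P₁) := rfl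

theorem norm_sandwichL_le (P₂ : F →L[ℝ] F) (P₁ : E →L[ℝ] E) :
    ‖sandwichL P₂ P₁‖ ≤ ‖P₂‖ * ‖P₁‖ := by
  refine ContinuousLinearMap.opNorm_le_bound _ (by positivity) fun T => ?_
  calc ‖P₂.comp (T.comp P₁)‖ ≤ ‖P₂‖ * (‖T‖ * ‖P₁‖) :=
        (P₂.opNorm_comp_le _).trans (by gcongr; exact T.opNorm_comp_le P₁)
    _ = ‖P₂‖ * ‖P₁‖ * ‖T‖ := by ring

theorem IsCompactOperator.tendsto_sandwichL [CompleteSpace F] {P₂ : ℕ → F →L[ℝ] F}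
    {P₁ : ℕ → E →L[ℝ] E} (hP₂ : ∀ y, Tendsto (fun n => P₂ n y) atTop (𝓝 y))
    (hP₁ : ∀ φ : E →L[ℝ] ℝ, Tendsto (fun n => φ.comp (P₁ n)) atTop (𝓝 φ)) {T : E →L[ℝ] F}
    (hT : IsCompactOperator T) : Tendsto (fun n => sandwichL (P₂ n) (P₁ n) T) atTop (𝓝 T) := by
  obtain ⟨M, hM⟩ := exists_norm_le_of_tendsto_apply hP₂
  have hright : Tendsto (fun n => (P₂ n).comp (T.comp (P₁ n) - T)) atTop (𝓝 0) := by
    refine squeeze_zero_norm (fun n => ((P₂ n).opNorm_comp_le _).trans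
      (mul_le_mul_of_nonneg_right (hM n) (norm_nonneg _))) ?_
    simpa using ((hT.tendsto_comp_of_tendsto_dualMap hP₁).sub_const T).norm.const_mul M
  simpa using hright.add (hT.tendsto_comp_of_tendsto_apply hP₂)

end Operators

theorem exists_pos_le_norm_apply_of_tendsto_subseq {α G : Type*} [NormedAddCommGroup G]
    [NormedSpace ℝ G] (Q : ℕ → G →L[ℝ] G) {M : ℝ} (hQ : ∀ n, ‖Q n‖ ≤ M) {s : Set α}
    (d : α → G) (hd : ∀ a : ℕ → α, (∀ n, a n ∈ s) → ∃ T ≠ 0, Tendsto (fun n => Q n T) atTop (𝓝 T) ∧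
      ∃ σ : ℕ → ℕ, StrictMono σ ∧ Tendsto (fun k => d (a (σ k))) atTop (𝓝 T)) :
    ∃ N, ∃ c > 0, ∀ i ∈ s, c ≤ ‖Q N (d i)‖ := by
  by_contra! h
  choose a has ha using fun n : ℕ => h n (1 / (n + 1)) (by positivity)
  obtain ⟨T, hT0, hQT, σ, hσ, hdT⟩ := hd a has
  have hsmall : Tendsto (fun k => Q (σ k) (d (a (σ k)))) atTop (𝓝 0) :=
    squeeze_zero_norm (fun k => (ha (σ k)).le)
      (tendsto_one_div_add_atTop_nhds_zero_nat.comp hσ.tendsto_atTop)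
  have hnear : Tendsto (fun k => Q (σ k) (d (a (σ k))) - Q (σ k) T) atTop (𝓝 0) := by
    refine squeeze_zero_norm (fun k => ?_)
      (by simpa using (tendsto_sub_nhds_zero_iff.2 hdT).norm.const_mul M)
    rw [← map_sub]
    exact (Q (σ k)).le_of_opNorm_le (hQ _) _
  have hlarge : Tendsto (fun k => Q (σ k) (d (a (σ k)))) atTop (𝓝 T) := by
    simpa using hnear.add (hQT.comp hσ.tendsto_atTop)
  exact hT0 (tendsto_nhds_unique hlarge hsmall)

section DifferenceQuotients

variable {E G : Type*} [NormedAddCommGroup E] [NormedSpace ℝ E]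
  [NormedAddCommGroup G] [NormedSpace ℝ G]

theorem Convex.sub_mem_of_hasFDerivWithinAt {S : Submodule ℝ G} (hS : IsClosed (S : Set G))
    {f : E → G} {f' : E → E →L[ℝ] G} {s : Set E} (hs : Convex ℝ s)
    (hf : ∀ x ∈ s, HasFDerivWithinAt f (f' x) s x) (hf' : ∀ x ∈ s, ∀ v, f' x v ∈ S)
    {x y : E} (hx : x ∈ s) (hy : y ∈ s) : f y - f x ∈ S := by
  -- closedness of `S` makes `G ⧸ S` a normed space, where `f` has zero derivative on `s`
  have : IsClosed (S : Set G) := hS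
  have hquot : ∀ z ∈ s, S.mkQL.comp (f' z) = 0 := fun z hz =>
    ContinuousLinearMap.ext fun v => (Submodule.Quotient.mk_eq_zero S).2 (hf' z hz v)
  have := hs.norm_image_sub_le_of_norm_hasFDerivWithin_le (C := 0)
    (fun z hz => S.mkQL.hasFDerivAt.comp_hasFDerivWithinAt z (hf z hz))
    (fun z hz => by rw [hquot z hz, norm_zero]) hx hy
  rw [zero_mul, norm_le_zero_iff, Function.comp_apply, Function.comp_apply, ← map_sub] at this
  exact (Submodule.Quotient.mk_eq_zero S).1 this

noncomputable def diffQuotient (f : E → G) (x y : E) : G := ‖x - y‖⁻¹ • (f x - f y)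

theorem HasStrictFDerivAt.tendsto_diffQuotient {ι : Type*} {l : Filter ι} {f : E → G}
    {f' : E →L[ℝ] G} {a : E} (hf : HasStrictFDerivAt f f' a) {x y : ι → E} {τ : E}
    (hx : Tendsto x l (𝓝 a)) (hy : Tendsto y l (𝓝 a))
    (hτ : Tendsto (fun i => diffQuotient id (x i) (y i)) l (𝓝 τ)) :
    Tendsto (fun i => diffQuotient f (x i) (y i)) l (𝓝 (f' τ)) := by
  have hrem :=
    (hf.isLittleO.comp_tendsto (hx.prodMk_nhds hy)).norm_right.tendsto_inv_smul_nhds_zero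
  simpa [diffQuotient, smul_sub] using hrem.add ((f'.continuous.tendsto τ).comp hτ)

theorem exists_tendsto_diffQuotient_subseq {W : Submodule ℝ E} [FiniteDimensional ℝ W]
    {K : Set E} (hK : IsCompact K) (hKconv : Convex ℝ K) (hKW : K ⊆ W)
    {S : Submodule ℝ G} (hS : IsClosed (S : Set G)) {F : E → G} {F' : E → E →L[ℝ] G}
    (hF : ∀ x ∈ K, HasStrictFDerivAt F (F' x) x) (hFinj : InjOn F K)
    (hF'inj : ∀ x ∈ K, InjOn (F' x) W) (hF'S : ∀ x ∈ K, ∀ τ ∈ W, F' x τ ∈ S)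
    {x y : ℕ → E} (hx : ∀ n, x n ∈ K) (hy : ∀ n, y n ∈ K) (hxy : ∀ n, x n ≠ y n) :
    ∃ T ∈ S, T ≠ 0 ∧ ∃ σ : ℕ → ℕ, StrictMono σ ∧
      Tendsto (fun k => diffQuotient F (x (σ k)) (y (σ k))) atTop (𝓝 T) := by
  obtain ⟨⟨p, q⟩, ⟨hp, hq⟩, φ, hφ, hpq⟩ :=
    (hK.prod hK).tendsto_subseq fun n => mk_mem_prod (hx n) (hy n)
  have hxp : Tendsto (fun k => x (φ k)) atTop (𝓝 p) := (continuous_fst.tendsto _).comp hpq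
  have hyq : Tendsto (fun k => y (φ k)) atTop (𝓝 q) := (continuous_snd.tendsto _).comp hpq
  rcases eq_or_ne p q with rfl | hne
  · let u : ℕ → W := fun n => diffQuotient id ⟨x n, hKW (hx n)⟩ ⟨y n, hKW (hy n)⟩
    have hu : ∀ n, u n ∈ sphere (0 : W) 1 := fun n => by
      have hne : (⟨x n, hKW (hx n)⟩ : W) - ⟨y n, hKW (hy n)⟩ ≠ 0 :=
        sub_ne_zero.2 fun h => hxy n (congrArg Subtype.val h)
      rw [mem_sphere_zero_iff_norm]
      simp only [u, diffQuotient, id, norm_smul, norm_inv, norm_norm]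
      exact inv_mul_cancel₀ (norm_ne_zero_iff.2 hne)
    obtain ⟨τ, hτ, ψ, hψ, hτlim⟩ := (isCompact_sphere (0 : W) 1).tendsto_subseq fun k => hu (φ k)
    refine ⟨F' p τ, hF'S p hp τ τ.2, fun h0 => ?_, φ ∘ ψ, hφ.comp hψ,
      (hF p hp).tendsto_diffQuotient (hxp.comp hψ.tendsto_atTop) (hyq.comp hψ.tendsto_atTop) ?_⟩
    · have : (τ : E) = 0 := hF'inj p hp τ.2 (zero_mem W) (h0.trans (map_zero _).symm)
      simp [this] at hτ
    · simpa [u, diffQuotient, Function.comp_def] using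
        (continuous_subtype_val.tendsto τ).comp hτlim
  · have hmem : F p - F q ∈ S :=
      (hKconv.linear_preimage W.subtype).sub_mem_of_hasFDerivWithinAt hS (f := F ∘ W.subtype)
        (f' := fun z => (F' z).comp W.subtypeL)
        (fun z hz => ((hF z hz).hasFDerivAt.comp z W.subtypeL.hasFDerivAt).hasFDerivWithinAt)
        (fun z hz v => hF'S z hz v v.2) (x := ⟨q, hKW hq⟩) (y := ⟨p, hKW hp⟩) hq hp
    have hdist : ‖p - q‖ ≠ 0 := norm_ne_zero_iff.2 (sub_ne_zero.2 hne)
    refine ⟨_, S.smul_mem _ hmem, smul_ne_zero (inv_ne_zero hdist)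
      (sub_ne_zero.2 (hFinj.ne hp hq hne)), φ, hφ, ?_⟩
    exact ((hxp.sub hyq).norm.inv₀ hdist).smul
      (((hF p hp).continuousAt.tendsto.comp hxp).sub ((hF q hq).continuousAt.tendsto.comp hyq))

end DifferenceQuotients

theorem corollary_operator_valued_general
    {X Y₁ Y₂ : Type*} [NormedAddCommGroup X] [NormedSpace ℝ X]
    [NormedAddCommGroup Y₁] [NormedSpace ℝ Y₁]
    [NormedAddCommGroup Y₂] [NormedSpace ℝ Y₂] [CompleteSpace Y₂]
    (A : Set X) (hA : IsOpen A)
    (W : Submodule ℝ X) [FiniteDimensional ℝ W]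
    (K : Set X) (hKWA : K ⊆ (W : Set X) ∩ A)
    (hKcomp : IsCompact K) (hKconv : Convex ℝ K)
    (F : X → (Y₁ →L[ℝ] Y₂)) (F' : X → X →L[ℝ] (Y₁ →L[ℝ] Y₂))
    (hF : ∀ x ∈ A, HasFDerivAt F (F' x) x)
    (hF'cont : ContinuousOn F' A)
    (hFinj : Set.InjOn F ((W : Set X) ∩ A))
    (hF'inj : ∀ x ∈ (W : Set X) ∩ A, Set.InjOn (F' x) (W : Set X))
    -- F'(ξ)τ is a compact operator for every ξ ∈ A and τ ∈ W
    (hcomp : ∀ ξ ∈ A, ∀ τ ∈ W, IsCompactOperator (F' ξ τ))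
    (P₁ : ℕ → Y₁ →L[ℝ] Y₁) (P₂ : ℕ → Y₂ →L[ℝ] Y₂)
    -- P²_N → I strongly
    (hP₂ : ∀ y : Y₂, Tendsto (fun N => P₂ N y) atTop (𝓝 y))
    -- (P¹_N)* → I strongly on the dual of Y¹
    (hP₁ : ∀ φ : Y₁ →L[ℝ] ℝ, Tendsto (fun N => φ.comp (P₁ N)) atTop (𝓝 φ)) :
    ∃ (N : ℕ) (C : ℝ), 0 < C ∧
      ∀ x₁ ∈ K, ∀ x₂ ∈ K,
        ‖x₁ - x₂‖ ≤
          C * ‖(P₂ N).comp ((F x₁).comp (P₁ N)) - (P₂ N).comp ((F x₂).comp (P₁ N))‖ := by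
  have hKA : K ⊆ A := fun x hx => (hKWA hx).2
  obtain ⟨M₂, hM₂⟩ := exists_norm_le_of_tendsto_apply hP₂
  obtain ⟨M₁, hM₁⟩ := exists_norm_le_of_tendsto_dualMap hP₁
  have hQ (n : ℕ) : ‖sandwichL (P₂ n) (P₁ n)‖ ≤ M₂ * M₁ := (norm_sandwichL_le _ _).trans
    (mul_le_mul (hM₂ n) (hM₁ n) (norm_nonneg _) ((norm_nonneg _).trans (hM₂ n)))
  have hstrict : ∀ x ∈ K, HasStrictFDerivAt F (F' x) x := fun x hx =>
    hasStrictFDerivAt_of_hasFDerivAt_of_continuousAt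
      (eventually_of_mem (hA.mem_nhds (hKA hx)) hF) (hF'cont.continuousAt (hA.mem_nhds (hKA hx)))
  obtain ⟨N, c, hc, hN⟩ := exists_pos_le_norm_apply_of_tendsto_subseq _ hQ
    (s := {p : X × X | p.1 ∈ K ∧ p.2 ∈ K ∧ p.1 ≠ p.2}) (fun p => diffQuotient F p.1 p.2)
    fun a ha => by
      obtain ⟨T, hT, hT0, σ, hσ, hlim⟩ := exists_tendsto_diffQuotient_subseq hKcomp hKconv
        (fun x hx => (hKWA hx).1) (S := compactOperator (RingHom.id ℝ) Y₁ Y₂)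
        isClosed_setOfPred_isCompactOperator hstrict
        (hFinj.mono hKWA) (fun x hx => hF'inj x (hKWA hx)) (fun x hx => hcomp x (hKA hx))
        (fun n => (ha n).1) (fun n => (ha n).2.1) (fun n => (ha n).2.2)
      exact ⟨T, hT0, hT.tendsto_sandwichL hP₂ hP₁, σ, hσ, hlim⟩
  refine ⟨N, c⁻¹, inv_pos.2 hc, fun x₁ h₁ x₂ h₂ => ?_⟩
  rcases eq_or_ne x₁ x₂ with rfl | hne
  · simp
  have h := hN (x₁, x₂) ⟨h₁, h₂, hne⟩
  rw [diffQuotient, map_smul, norm_smul, norm_inv, norm_norm, map_sub,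
    le_inv_mul_iff₀ (norm_pos_iff.2 (sub_ne_zero.2 hne))] at h
  rw [le_inv_mul_iff₀ hc, mul_comm]
  simpa using h

/-- Corollary `cor:main`, case (b): operator-valued measurements
`Y = L_c(Y¹,Y²)`, `Q_N(T) = P²_N T P¹_N`, with compact Fréchet derivative. -/
theorem corollary_operator_valued
    {X Y₁ Y₂ : Type*} [NormedAddCommGroup X] [NormedSpace ℝ X] [CompleteSpace X]
    [NormedAddCommGroup Y₁] [NormedSpace ℝ Y₁] [CompleteSpace Y₁]
    [NormedAddCommGroup Y₂] [NormedSpace ℝ Y₂] [CompleteSpace Y₂]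
    (A : Set X) (hA : IsOpen A)
    (W : Submodule ℝ X) [FiniteDimensional ℝ W]
    (K : Set X) (hKWA : K ⊆ (W : Set X) ∩ A)
    (hKcomp : IsCompact K) (hKconv : Convex ℝ K)
    (F : X → (Y₁ →L[ℝ] Y₂)) (F' : X → X →L[ℝ] (Y₁ →L[ℝ] Y₂))
    (hF : ∀ x ∈ A, HasFDerivAt F (F' x) x)
    (hF'cont : ContinuousOn F' A)
    (hFinj : Set.InjOn F ((W : Set X) ∩ A))
    (hF'inj : ∀ x ∈ (W : Set X) ∩ A, Set.InjOn (F' x) (W : Set X))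
    -- F'(ξ)τ is a compact operator for every ξ ∈ A and τ ∈ W
    (hcomp : ∀ ξ ∈ A, ∀ τ ∈ W, IsCompactOperator (F' ξ τ))
    (P₁ : ℕ → Y₁ →L[ℝ] Y₁) (P₂ : ℕ → Y₂ →L[ℝ] Y₂)
    -- P²_N → I strongly
    (hP₂ : ∀ y : Y₂, Tendsto (fun N => P₂ N y) atTop (𝓝 y))
    -- (P¹_N)* → I strongly on the dual of Y¹
    (hP₁ : ∀ φ : Y₁ →L[ℝ] ℝ, Tendsto (fun N => φ.comp (P₁ N)) atTop (𝓝 φ)) :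
    ∃ (N : ℕ) (C : ℝ), 0 < C ∧
      ∀ x₁ ∈ K, ∀ x₂ ∈ K,
        ‖x₁ - x₂‖ ≤
          C * ‖(P₂ N).comp ((F x₁).comp (P₁ N)) - (P₂ N).comp ((F x₂).comp (P₁ N))‖ :=
  corollary_operator_valued_general A hA W K hKWA hKcomp hKconv F F' hF hF'cont hFinj hF'inj hcomp
    P₁ P₂ hP₂ hP₁
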